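/- arXiv:1805.03167 — 2 statements merged into one kernel-verified Lean document; each statement's English description precedes it below -/
import Mathlib

section
/- Let A = k[x]/(x²) and let P be its (shifted) 2-periodic Koszul resolution with generators e_i = 1⊗1 in homological degree corresponding to i, differential e_i ↦ e_{i−1}·u for i even and e_i ↦ e_{i−1}·v for i odd (u = x⊗1 − 1⊗x, v = x⊗1 + 1⊗x). Define δ₂(e_i) = Σ_{j+l=i} (−1)^j e_j ⊗_A e_l. Then δ₂ is a chain map P → P⊗_A P, i.e. it commutes with the differentials up to the appropriate Koszul sign. -/
open TensorProduct DirectSum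

set_option synthInstance.maxHeartbeats 1000000
set_option maxHeartbeats 2000000

namespace Stmt8

variable (k : Type*) [Field k]

/-- The algebra `A = k[x]/(x²)`. -/
abbrev A : Type _ := Polynomial k ⧸ Ideal.span {(Polynomial.X : Polynomial k) ^ 2}

/-- The class of `x`. -/
noncomputable def x : A k := Ideal.Quotient.mk _ Polynomial.X

/-- `A ⊗ A`, the free rank one `A`-bimodule. -/
abbrev T2 : Type _ := A k ⊗[k] A k

/-- `A ⊗ A ⊗ A`, the underlying bimodule of `(A⊗A) ⊗_A (A⊗A)`. -/
abbrev T3 : Type _ := A k ⊗[k] (A k ⊗[k] A k)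

noncomputable instance : CommRing (T2 k) := inferInstance
noncomputable instance : Algebra k (T2 k) := inferInstance
noncomputable instance : CommRing (T3 k) := inferInstance
noncomputable instance : Algebra k (T3 k) := inferInstance

/-- `u = x⊗1 − 1⊗x`. -/
noncomputable def u : T2 k := x k ⊗ₜ[k] 1 - 1 ⊗ₜ[k] x k

/-- `v = x⊗1 + 1⊗x`. -/
noncomputable def v : T2 k := x k ⊗ₜ[k] 1 + 1 ⊗ₜ[k] x k

/-- The element by which the differential `d(e_i) = e_{i−1}·w i` multiplies:
out of an odd-indexed generator it is `u`, out of an even-indexed one it is `v`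
(so that the resolution ends `⋯ →·v A⊗A →·u A⊗A →μ A`). -/
noncomputable def w (i : ℕ) : T2 k := if Odd i then u k else v k

/-- The shifted 2-periodic Koszul resolution `P = ⊕_{i∈ℕ} (A⊗A)·e_i`. -/
abbrev M : Type _ := ⨁ _i : ℕ, T2 k

/-- `P ⊗_A P = ⊕_{(j,l)} (A⊗A⊗A)·(e_j ⊗ e_l)`. -/
abbrev N : Type _ := ⨁ _p : ℕ × ℕ, T3 k

/-- The differential of `P`: `e_i ↦ e_{i−1} · w i`. -/
noncomputable def dP : M k →ₗ[k] M k :=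
  DirectSum.toModule k ℕ (M k) fun i =>
    match i with
    | 0 => 0
    | (j + 1) =>
        (DirectSum.lof k ℕ (fun _ => T2 k) j) ∘ₗ LinearMap.mulRight k (w k (j + 1))

/-- The bimodule map `A⊗A → A⊗A⊗A`, `a⊗b ↦ a⊗1⊗b` (i.e. `a e_j ⊗_A e_l b`). -/
noncomputable def ι13 : T2 k →ₗ[k] T3 k :=
  TensorProduct.map LinearMap.id ((TensorProduct.mk k (A k) (A k)) 1)

/-- The diagonal `δ₂ : P → P ⊗_A P`, `δ₂(e_i) = Σ_{j+l=i} (−1)^j e_j ⊗_A e_l`. -/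
noncomputable def δ₂ : M k →ₗ[k] N k :=
  DirectSum.toModule k ℕ (N k) fun i =>
    ∑ j ∈ Finset.range (i + 1),
      ((-1 : ℤ) ^ j) •
        ((DirectSum.lof k (ℕ × ℕ) (fun _ => T3 k) (j, i - j)) ∘ₗ ι13 k)

/-- `w m` embedded in the first two tensor slots of `A⊗A⊗A` (the action of the
differential on the first factor of `P ⊗_A P`). -/
noncomputable def e12 (m : ℕ) : T3 k :=
  if Odd m then x k ⊗ₜ[k] ((1 : A k) ⊗ₜ[k] 1) - 1 ⊗ₜ[k] (x k ⊗ₜ[k] 1)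
  else x k ⊗ₜ[k] ((1 : A k) ⊗ₜ[k] 1) + 1 ⊗ₜ[k] (x k ⊗ₜ[k] 1)

/-- `w m` embedded in the last two tensor slots of `A⊗A⊗A`. -/
noncomputable def e23 (m : ℕ) : T3 k :=
  if Odd m then 1 ⊗ₜ[k] (x k ⊗ₜ[k] (1 : A k)) - 1 ⊗ₜ[k] ((1 : A k) ⊗ₜ[k] x k)
  else 1 ⊗ₜ[k] (x k ⊗ₜ[k] (1 : A k)) + 1 ⊗ₜ[k] ((1 : A k) ⊗ₜ[k] x k)

/-- The differential of `P ⊗_A P`, `d⊗1 + 1⊗d` with the Koszul sign `(−1)^{1−j}`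
on the second summand (the shifted degree of `e_j` is `1−j`). -/
noncomputable def dN : N k →ₗ[k] N k :=
  DirectSum.toModule k (ℕ × ℕ) (N k) fun p =>
    (match p with
      | (0, _) => 0
      | (j + 1, l) =>
          (DirectSum.lof k (ℕ × ℕ) (fun _ => T3 k) (j, l)) ∘ₗ
            LinearMap.mulRight k (e12 k (j + 1))) +
    (match p with
      | (_, 0) => 0
      | (j, l + 1) =>
          ((-1 : ℤ) ^ (j + 1)) •
            ((DirectSum.lof k (ℕ × ℕ) (fun _ => T3 k) (j, l)) ∘ₗ
              LinearMap.mulRight k (e23 k (l + 1))))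

lemma ι13_mul (s t : T2 k) : ι13 k (s * t) = ι13 k s * ι13 k t := by
  induction s using TensorProduct.induction_on with
  | zero => simp
  | tmul a b =>
    induction t using TensorProduct.induction_on with
    | zero => simp
    | tmul c d =>
        simp [ι13, Algebra.TensorProduct.tmul_mul_tmul]
    | add y z hy hz => rw [mul_add, map_add, map_add, hy, hz, mul_add]
  | add y z hy hz => rw [add_mul, map_add, map_add, hy, hz, add_mul]

lemma ι13_w (m : ℕ) :
    ι13 k (w k m) =
      if Odd m then x k ⊗ₜ[k] ((1 : A k) ⊗ₜ[k] 1) - 1 ⊗ₜ[k] ((1 : A k) ⊗ₜ[k] x k)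
      else x k ⊗ₜ[k] ((1 : A k) ⊗ₜ[k] 1) + 1 ⊗ₜ[k] ((1 : A k) ⊗ₜ[k] x k) := by
  by_cases h : Odd m <;> simp [w, u, v, ι13, h]

/-- The key sign identity in `T3`. -/
lemma key (j l : ℕ) :
    ((-1 : ℤ) ^ (j + 1)) • e12 k (j + 1) - e23 k (l + 1)
      + ((-1 : ℤ) ^ j) • ι13 k (w k (j + l + 1)) = 0 := by
  rcases Nat.even_or_odd j with hj | hj <;> rcases Nat.even_or_odd l with hl | hl <;>
    first
    | (rw [Nat.even_iff] at hj; rw [Nat.even_iff] at hl) | (rw [Nat.even_iff] at hj; rw [Nat.odd_iff] at hl)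
    | (rw [Nat.odd_iff] at hj; rw [Nat.even_iff] at hl) | (rw [Nat.odd_iff] at hj; rw [Nat.odd_iff] at hl)
  · rw [e12, e23, ι13_w, if_pos (Nat.odd_iff.mpr (by omega)),
      if_pos (Nat.odd_iff.mpr (by omega)), if_pos (Nat.odd_iff.mpr (by omega)),
      Odd.neg_one_pow (Nat.odd_iff.mpr (by omega)), Even.neg_one_pow (Nat.even_iff.mpr (by omega))]
    abel
  · rw [e12, e23, ι13_w, if_pos (Nat.odd_iff.mpr (by omega)),
      if_neg (by rw [Nat.odd_iff]; omega), if_neg (by rw [Nat.odd_iff]; omega),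
      Odd.neg_one_pow (Nat.odd_iff.mpr (by omega)), Even.neg_one_pow (Nat.even_iff.mpr (by omega))]
    abel
  · rw [e12, e23, ι13_w, if_neg (by rw [Nat.odd_iff]; omega),
      if_pos (Nat.odd_iff.mpr (by omega)), if_neg (by rw [Nat.odd_iff]; omega),
      Even.neg_one_pow (Nat.even_iff.mpr (by omega)), Odd.neg_one_pow (Nat.odd_iff.mpr (by omega))]
    abel
  · rw [e12, e23, ι13_w, if_neg (by rw [Nat.odd_iff]; omega),
      if_neg (by rw [Nat.odd_iff]; omega), if_pos (Nat.odd_iff.mpr (by omega)),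
      Even.neg_one_pow (Nat.even_iff.mpr (by omega)), Odd.neg_one_pow (Nat.odd_iff.mpr (by omega))]
    abel

/-- The `d⊗1` part of `dN` on a generator. -/
noncomputable def Apart (j l : ℕ) (s : T3 k) : N k :=
  match j with
  | 0 => 0
  | j + 1 => DirectSum.lof k (ℕ × ℕ) (fun _ => T3 k) (j, l) (s * e12 k (j + 1))

/-- The `1⊗d` part of `dN` on a generator. -/
noncomputable def Bpart (j l : ℕ) (s : T3 k) : N k :=
  match l with
  | 0 => 0
  | l + 1 =>
      ((-1 : ℤ) ^ (j + 1)) •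
        DirectSum.lof k (ℕ × ℕ) (fun _ => T3 k) (j, l) (s * e23 k (l + 1))

@[simp] lemma Apart_zero (l : ℕ) (s : T3 k) : Apart k 0 l s = 0 := rfl
@[simp] lemma Apart_succ (j l : ℕ) (s : T3 k) :
    Apart k (j + 1) l s =
      DirectSum.lof k (ℕ × ℕ) (fun _ => T3 k) (j, l) (s * e12 k (j + 1)) := rfl
@[simp] lemma Bpart_zero (j : ℕ) (s : T3 k) : Bpart k j 0 s = 0 := rfl
@[simp] lemma Bpart_succ (j l : ℕ) (s : T3 k) :
    Bpart k j (l + 1) s =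
      ((-1 : ℤ) ^ (j + 1)) •
        DirectSum.lof k (ℕ × ℕ) (fun _ => T3 k) (j, l) (s * e23 k (l + 1)) := rfl

lemma dN_lof (j l : ℕ) (s : T3 k) :
    dN k (DirectSum.lof k (ℕ × ℕ) (fun _ => T3 k) (j, l) s)
      = Apart k j l s + Bpart k j l s := by
  cases j <;> cases l <;>
    simp only [dN, DirectSum.toModule_lof, Apart, Bpart, LinearMap.add_apply,
      LinearMap.comp_apply, LinearMap.smul_apply, LinearMap.zero_apply,
      LinearMap.mulRight_apply, zero_add, add_zero]

lemma dP_lof_succ (m : ℕ) (t : T2 k) :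
    dP k (DirectSum.lof k ℕ (fun _ => T2 k) (m + 1) t)
      = DirectSum.lof k ℕ (fun _ => T2 k) m (t * w k (m + 1)) := by
  rw [dP, DirectSum.toModule_lof]; rfl

lemma dP_lof_zero (t : T2 k) :
    dP k (DirectSum.lof k ℕ (fun _ => T2 k) 0 t) = 0 := by
  rw [dP, DirectSum.toModule_lof]; rfl

lemma δ₂_lof (i : ℕ) (t : T2 k) :
    δ₂ k (DirectSum.lof k ℕ (fun _ => T2 k) i t)
      = ∑ j ∈ Finset.range (i + 1),
          ((-1 : ℤ) ^ j) •
            DirectSum.lof k (ℕ × ℕ) (fun _ => T3 k) (j, i - j) (ι13 k t) := by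
  rw [δ₂, DirectSum.toModule_lof]
  simp only [LinearMap.sum_apply, LinearMap.smul_apply, LinearMap.comp_apply]

/-- `δ₂` is a chain map `P → P ⊗_A P`: it (anti)commutes with the
differentials with the Koszul sign appropriate to its degree, i.e. `∂(δ₂) = 0`
in the Hom complex: `d_{P⊗P} ∘ δ₂ + δ₂ ∘ d_P = 0`. -/
theorem stmt8 : dN k ∘ₗ δ₂ k + δ₂ k ∘ₗ dP k = 0 := by
  apply DirectSum.linearMap_ext
  intro i
  apply LinearMap.ext
  intro t
  simp only [LinearMap.comp_apply, LinearMap.add_apply, LinearMap.zero_apply]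
  cases i with
  | zero =>
      rw [dP_lof_zero, map_zero, add_zero, δ₂_lof]
      rw [Finset.range_one, Finset.sum_singleton, pow_zero, one_smul, Nat.sub_zero]
      rw [dN_lof k 0 0, Apart_zero, Bpart_zero, add_zero]
  | succ m =>
      rw [dP_lof_succ, δ₂_lof, δ₂_lof, map_sum]
      simp only [map_zsmul, dN_lof, smul_add]
      rw [Finset.sum_add_distrib]
      have hA : ∑ j ∈ Finset.range (m + 1 + 1),
          ((-1 : ℤ) ^ j) • Apart k j (m + 1 - j) (ι13 k t)
          = ∑ j ∈ Finset.range (m + 1),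
              ((-1 : ℤ) ^ (j + 1)) •
                DirectSum.lof k (ℕ × ℕ) (fun _ => T3 k) (j, m - j)
                  (ι13 k t * e12 k (j + 1)) := by
        rw [Finset.sum_range_succ']
        simp
      have hB : ∑ j ∈ Finset.range (m + 1 + 1),
          ((-1 : ℤ) ^ j) • Bpart k j (m + 1 - j) (ι13 k t)
          = ∑ j ∈ Finset.range (m + 1),
              (-1 : ℤ) •
                DirectSum.lof k (ℕ × ℕ) (fun _ => T3 k) (j, m - j)
                  (ι13 k t * e23 k (m - j + 1)) := by
        rw [Finset.sum_range_succ]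
        simp only [Nat.sub_self, Bpart_zero, smul_zero, add_zero]
        refine Finset.sum_congr rfl fun j hj => ?_
        have hjm : j ≤ m := by simpa [Nat.lt_succ_iff] using hj
        have h1 : m + 1 - j = (m - j) + 1 := by omega
        rw [h1, Bpart_succ, smul_smul]
        congr 1
        rw [← pow_add]
        have : (j + (j + 1)) = 2 * j + 1 := by ring
        rw [this, pow_succ, pow_mul]
        norm_num
      rw [hA, hB, ← Finset.sum_add_distrib, ← Finset.sum_add_distrib]
      apply Finset.sum_eq_zero
      intro j hj
      have hjm : j ≤ m := by simpa [Nat.lt_succ_iff] using hj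
      have hw : m + 1 = j + (m - j) + 1 := by omega
      rw [ι13_mul, hw]
      simp only [← map_zsmul (DirectSum.lof k (ℕ × ℕ) (fun _ => T3 k) (j, m - j)),
        ← map_add]
      rw [← map_zero (DirectSum.lof k (ℕ × ℕ) (fun _ => T3 k) (j, m - j))]
      congr 1
      have hkey := congrArg (fun z => ι13 k t * z) (key k j (m - j))
      simp only [mul_add, mul_sub, mul_smul_comm, mul_zero] at hkey
      rw [sub_eq_add_neg] at hkey
      rw [neg_one_zsmul]
      exact hkey

end Stmt8
end

section
/- Let A be a field-algebra, P a complex of A-bimodules with maps δ₂: P → P⊗_A P and μ: P → A satisfying (μ⊗_A μ)δ₂ = μ, where μ is a quasi-isomorphism from P to A (shifted). Then the maps (1⊗_A μ)δ₂ and −(μ⊗_A 1)δ₂ from P to P are each chain-homotopic to the identity map of P, and consequently (1⊗_A μ − μ⊗_A 1)δ₂ is homotopic to 2·id_P. -/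
open CategoryTheory

namespace Stmt16Aux

universe v
variable {R : Type} [Ring R]

lemma lift_aux {L M N : ModuleCat.{v} R} (hL : Projective L)
    (d : M ⟶ N) (u : L ⟶ N) (hu : ∀ x, u x ∈ LinearMap.range d.hom) :
    ∃ v : L ⟶ M, v ≫ d = u := by
  have hproj : Module.Projective R L := (IsProjective.iff_projective (R := R) L).mpr hL
  obtain ⟨h, hh⟩ := Module.projective_lifting_property d.hom.rangeRestrict
    (u.hom.codRestrict (LinearMap.range d.hom) hu) d.hom.surjective_rangeRestrict
  refine ⟨ModuleCat.ofHom h, ?_⟩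
  ext x
  have := congrArg Subtype.val (DFunLike.congr_fun hh x)
  simpa using this

variable (P : CochainComplex (ModuleCat.{v} R) ℤ) (f : P ⟶ P)

/-- Partial homotopy data: valid in degrees `≥ 1 - n`. -/
def HSeq (n : ℕ) : Type v :=
  Σ' s : ∀ i j : ℤ, P.X i ⟶ P.X j,
    ∀ i j k : ℤ, j + 1 = i → i + 1 = k → 1 - (n : ℤ) ≤ i →
      f.f i = P.d i k ≫ s k i + s i j ≫ P.d j i + 𝟙 (P.X i)

/-- base lift : `b₀ ≫ P.d 0 1 = f.f 1 - 𝟙`. -/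
lemma base_ex (hproj : ∀ i : ℤ, Projective (P.X i))
    {A : ModuleCat R} (μ : P.X 1 ⟶ A)
    (hker : Function.Exact (P.d 0 1) μ) (hf : f.f 1 ≫ μ = μ) :
    ∃ b : P.X 1 ⟶ P.X 0, b ≫ P.d 0 1 = f.f 1 - 𝟙 (P.X 1) := by
  apply lift_aux (hproj 1)
  intro x
  have h1 : μ (f.f 1 x) = μ x := by
    have := congrArg (fun φ : P.X 1 ⟶ A => φ x) hf
    simpa using this
  have h2 : μ ((f.f 1 - 𝟙 (P.X 1)) x) = 0 := by
    have : (f.f 1 - 𝟙 (P.X 1)) x = f.f 1 x - x := rfl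
    rw [this, map_sub, h1, sub_self]
  obtain ⟨y, hy⟩ := (hker _).mp h2
  exact ⟨y, hy⟩

noncomputable def base (hproj : ∀ i : ℤ, Projective (P.X i))
    (hbdd : ∀ i : ℤ, 1 < i → Limits.IsZero (P.X i))
    {A : ModuleCat R} (μ : P.X 1 ⟶ A)
    (hker : Function.Exact (P.d 0 1) μ) (hf : f.f 1 ≫ μ = μ) : HSeq P f 0 := by
  refine ⟨Function.update (fun i j => 0) 1
    (Function.update (fun j => 0) 0 (base_ex P f hproj μ hker hf).choose), ?_⟩
  intro i j k hj hk hi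
  obtain rfl : j = i - 1 := by omega
  obtain rfl : k = i + 1 := by omega
  rcases eq_or_lt_of_le (show (1:ℤ) ≤ i by omega) with h1 | h1
  · obtain rfl := h1.symm
    have hb := (base_ex P f hproj μ hker hf).choose_spec
    rw [show (1:ℤ) - 1 = 0 by norm_num]
    rw [Function.update_of_ne (show (1:ℤ)+1 ≠ 1 by omega), Function.update_self,
      Function.update_self]
    simp [hb]
  · exact (hbdd i h1).eq_of_src _ _

lemma step_ex (hproj : ∀ i : ℤ, Projective (P.X i))
    (hexact : ∀ i : ℤ, i ≤ 0 → Function.Exact (P.d (i - 1) i) (P.d i (i + 1)))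
    (n : ℕ) (t : HSeq P f n) :
    ∃ b : P.X (-(n:ℤ)) ⟶ P.X (-(n:ℤ) - 1),
      b ≫ P.d (-(n:ℤ) - 1) (-(n:ℤ)) =
        (f.f (-(n:ℤ)) - 𝟙 _) - P.d (-(n:ℤ)) (-(n:ℤ) + 1) ≫ t.1 (-(n:ℤ) + 1) (-(n:ℤ)) := by
  set i : ℤ := -(n:ℤ) with hi
  apply lift_aux (hproj i)
  intro x
  have hE := hexact i (by omega)
  have hu : ((f.f i - 𝟙 _) - P.d i (i + 1) ≫ t.1 (i + 1) i) ≫ P.d i (i + 1) = 0 := by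
    have hc := t.2 (i + 1) i (i + 1 + 1) rfl rfl (by omega)
    have hcm : f.f i ≫ P.d i (i + 1) = P.d i (i + 1) ≫ f.f (i + 1) :=
      HomologicalComplex.Hom.comm f i (i + 1)
    calc ((f.f i - 𝟙 _) - P.d i (i + 1) ≫ t.1 (i + 1) i) ≫ P.d i (i + 1)
        = P.d i (i+1) ≫ f.f (i+1) - P.d i (i+1)
            - P.d i (i+1) ≫ (t.1 (i + 1) i ≫ P.d i (i + 1)) := by
          simp only [Preadditive.sub_comp, Category.id_comp, Category.assoc, hcm]
      _ = 0 := by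
          rw [hc]
          simp only [Preadditive.comp_add, HomologicalComplex.d_comp_d_assoc,
            Limits.zero_comp, Category.comp_id]
          abel
  have : P.d i (i + 1) (((f.f i - 𝟙 _) - P.d i (i + 1) ≫ t.1 (i + 1) i : P.X i ⟶ P.X i) x) = 0 := by
    rw [← CategoryTheory.comp_apply, hu]; rfl
  obtain ⟨y, hy⟩ := (hE _).mp this
  exact ⟨y, hy⟩

noncomputable def step (hproj : ∀ i : ℤ, Projective (P.X i))
    (hexact : ∀ i : ℤ, i ≤ 0 → Function.Exact (P.d (i - 1) i) (P.d i (i + 1)))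
    (n : ℕ) (t : HSeq P f n) : HSeq P f (n + 1) := by
  refine ⟨Function.update t.1 (-(n:ℤ))
    (Function.update (fun j => 0) (-(n:ℤ) - 1)
      (step_ex P f hproj hexact n t).choose), ?_⟩
  intro i j k hj hk hi
  obtain rfl : j = i - 1 := by omega
  obtain rfl : k = i + 1 := by omega
  rcases eq_or_lt_of_le (show -(n:ℤ) ≤ i by push_cast at hi ⊢; omega) with h1 | h1
  · obtain rfl := h1.symm
    have hb := (step_ex P f hproj hexact n t).choose_spec
    rw [Function.update_of_ne (show -(n:ℤ)+1 ≠ -(n:ℤ) by omega), Function.update_self,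
      Function.update_self, hb]
    abel
  · rw [Function.update_of_ne (show i+1 ≠ -(n:ℤ) by omega),
      Function.update_of_ne (show i ≠ -(n:ℤ) by omega)]
    exact t.2 i (i-1) (i+1) (by omega) rfl (by omega)

noncomputable def S (hproj : ∀ i : ℤ, Projective (P.X i))
    (hbdd : ∀ i : ℤ, 1 < i → Limits.IsZero (P.X i))
    {A : ModuleCat R} (μ : P.X 1 ⟶ A)
    (hker : Function.Exact (P.d 0 1) μ)
    (hexact : ∀ i : ℤ, i ≤ 0 → Function.Exact (P.d (i - 1) i) (P.d i (i + 1)))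
    (hf : f.f 1 ≫ μ = μ) : ∀ n : ℕ, HSeq P f n
  | 0 => base P f hproj hbdd μ hker hf
  | n + 1 => step P f hproj hexact n (S hproj hbdd μ hker hexact hf n)

lemma S_mono (hproj : ∀ i : ℤ, Projective (P.X i))
    (hbdd : ∀ i : ℤ, 1 < i → Limits.IsZero (P.X i))
    {A : ModuleCat R} (μ : P.X 1 ⟶ A)
    (hker : Function.Exact (P.d 0 1) μ)
    (hexact : ∀ i : ℤ, i ≤ 0 → Function.Exact (P.d (i - 1) i) (P.d i (i + 1)))
    (hf : f.f 1 ≫ μ = μ) :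
    ∀ {n m : ℕ}, n ≤ m → ∀ i j : ℤ, 1 - (n:ℤ) ≤ i →
    (S P f hproj hbdd μ hker hexact hf m).1 i j
      = (S P f hproj hbdd μ hker hexact hf n).1 i j := by
  intro n m hnm
  induction m, hnm using Nat.le_induction with
  | base => intro i j hi; rfl
  | succ m hnm ih =>
    intro i j hi
    rw [← ih i j hi]
    show (step P f hproj hexact m _).1 i j = _
    rw [step]
    simp only
    rw [Function.update_of_ne (show i ≠ -(m:ℤ) by omega)]

lemma key (hproj : ∀ i : ℤ, Projective (P.X i))
    (hbdd : ∀ i : ℤ, 1 < i → Limits.IsZero (P.X i))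
    {A : ModuleCat R} (μ : P.X 1 ⟶ A)
    (hker : Function.Exact (P.d 0 1) μ)
    (hexact : ∀ i : ℤ, i ≤ 0 → Function.Exact (P.d (i - 1) i) (P.d i (i + 1)))
    (hf : f.f 1 ≫ μ = μ) : Nonempty (Homotopy f (𝟙 P)) := by
  classical
  set SS := Stmt16Aux.S P f hproj hbdd μ hker hexact hf with hSS
  set s' : ∀ i j : ℤ, P.X i ⟶ P.X j := fun i j => (SS (1 - i).toNat).1 i j with hs'
  have hfin : ∀ i j k : ℤ, j + 1 = i → i + 1 = k →
      f.f i = P.d i k ≫ s' k i + s' i j ≫ P.d j i + 𝟙 (P.X i) := by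
    intro i j k hj hk
    have hcomm := (SS ((1 - i).toNat + 1)).2 i j k hj hk (by omega)
    have e1 : (SS ((1 - i).toNat + 1)).1 i j = s' i j :=
      S_mono P f hproj hbdd μ hker hexact hf (Nat.le_succ _) i j (by omega)
    have e2 : (SS ((1 - i).toNat + 1)).1 k i = s' k i :=
      S_mono P f hproj hbdd μ hker hexact hf (show (1 - k).toNat ≤ (1 - i).toNat + 1 by omega)
        k i (by omega)
    rw [e1, e2] at hcomm
    exact hcomm
  refine ⟨⟨fun i j => if h : j + 1 = i then s' i j else 0, ?_, ?_⟩⟩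
  · intro i j h
    beta_reduce
    rw [dif_neg]
    simpa [ComplexShape.up_Rel] using h
  · intro i
    rw [dNext_eq _ (show (ComplexShape.up ℤ).Rel i (i + 1) by simp [ComplexShape.up_Rel]),
      prevD_eq _ (show (ComplexShape.up ℤ).Rel (i - 1) i by simp [ComplexShape.up_Rel])]
    beta_reduce
    rw [dif_pos rfl, dif_pos (show (i - 1) + 1 = i by omega)]
    simpa using hfin i (i - 1) (i + 1) (by omega) rfl

end Stmt16Aux

/-- Let `P` be a shifted projective bimodule resolution of `A`
(a bounded-above complex of projective bimodules, zero in degrees `> 1`, exact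
except at the top, with augmentation `μ : P₁ → A` a quasi-isomorphism), equipped
with a weakly counital diagonal `δ₂ : P → P ⊗_A P` satisfying `(μ⊗μ)δ₂ = μ`.
Then the chain endomorphisms `f := (1 ⊗_A μ)δ₂` and `g := −(μ ⊗_A 1)δ₂` of `P`
— which, by the counit identity, are chain maps agreeing with the identity
after composition with `μ` — are each chain homotopic to `id_P`, and
consequently `(1⊗μ − μ⊗1)δ₂ = f + g` is chain homotopic to `2·id_P`.
(Bimodules are modules over the ring `R = A^e`; `f` and `g` are abstracted as
chain endomorphisms satisfying `μ ∘ f₁ = μ` and `μ ∘ g₁ = μ`.) -/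
theorem stmt16 {R : Type} [Ring R]
    (P : CochainComplex (ModuleCat R) ℤ)
    (hproj : ∀ i : ℤ, Projective (P.X i))
    (hbdd : ∀ i : ℤ, 1 < i → Limits.IsZero (P.X i))
    (A : ModuleCat R) (μ : P.X 1 ⟶ A)
    (hsurj : Function.Surjective μ)
    (hker : Function.Exact (P.d 0 1) μ)
    (hexact : ∀ i : ℤ, i ≤ 0 → Function.Exact (P.d (i - 1) i) (P.d i (i + 1)))
    (f g : P ⟶ P)
    (hf : f.f 1 ≫ μ = μ) (hg : g.f 1 ≫ μ = μ) :
    Nonempty (Homotopy f (𝟙 P)) ∧ Nonempty (Homotopy g (𝟙 P)) ∧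
      Nonempty (Homotopy (f + g) (2 • 𝟙 P)) := by
  have h1 := Stmt16Aux.key P f hproj hbdd μ hker hexact hf
  have h2 := Stmt16Aux.key P g hproj hbdd μ hker hexact hg
  refine ⟨h1, h2, ?_⟩
  obtain ⟨H1⟩ := h1
  obtain ⟨H2⟩ := h2
  exact ⟨(H1.add H2).trans (Homotopy.ofEq (two_smul ℕ (𝟙 P)).symm)⟩
end
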